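/- arXiv:2505.22556 — 2 statements merged into one kernel-verified Lean document; each statement's English description precedes it below -/
import Mathlib

section
/- Let $T$ be a measure-preserving transformation on a probability space $(X,\mu)$. Suppose there exist a collection $\mathcal{A}$ of measurable sets such that every measurable set can be approximated in measure arbitrarily well by countable disjoint unions of sets from $\mathcal{A}$, a function $n:\mathcal{A}\to\mathbb{N}$ with $\mu(T^{n(A)}A)=1$ for all $A\in\mathcal{A}$, and a constant $\lambda>0$ such that for all $A\in\mathcal{A}$ and measurable $B\subseteq A$, $\mu(T^{n(A)}B)\le\lambda\,\mu(B)/\mu(A)$. Then $T$ is exact, i.e., for every measurable set $B$ with $\mu(B)>0$, $\lim_{n\to\infty}\mu(T^nB)=1$. -/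
open MeasureTheory Filter Topology
open scoped ENNReal symmDiff

/-!
Since `T` preserves `μ`, the measures `μ (T^[k] '' B)` increase with `k`, so it suffices to make
them exceed `1 - ε`. Approximating `B` by a disjoint union of sets of `𝒜`, some piece `A` lies in
`B` up to a fraction `δ` of its measure (a density argument). As `T^[n A]` maps `A` onto a set of
full measure and distorts measures inside `A` by at most `λ / μ A`, the image of `A \ B` has
measure at most `λ δ`, whence `μ (T^[n A] '' B) ≥ 1 - λ δ`.
-/

section

variable {X : Type*} [MeasurableSpace X] {μ : Measure X}

theorem MeasureTheory.MeasurePreserving.measure_le_measure_image {T : X → X}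
    (hT : MeasurePreserving T μ μ) {S : Set X} (hS : MeasurableSet (T '' S)) :
    μ S ≤ μ (T '' S) :=
  calc μ S ≤ μ (T ⁻¹' (T '' S)) := measure_mono (Set.subset_preimage_image T S)
    _ = μ (T '' S) := hT.measure_preimage hS.nullMeasurableSet

theorem MeasureTheory.MeasurePreserving.monotone_measure_iterate_image {T : X → X}
    (hT : MeasurePreserving T μ μ) {B : Set X} (hB : ∀ k, MeasurableSet (T^[k] '' B)) :
    Monotone fun k => μ (T^[k] '' B) := by
  refine monotone_nat_of_le_succ fun k => ?_
  have hsucc : T^[k + 1] '' B = T '' (T^[k] '' B) := by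
    rw [Function.iterate_succ', Set.image_comp]
  rw [hsucc]
  exact hT.measure_le_measure_image (hsucc ▸ hB (k + 1))

theorem exists_measure_diff_le_mul_of_measure_symmDiff_lt {B : Set X} (hB : MeasurableSet B)
    {f : ℕ → Set X} (hf : ∀ i, MeasurableSet (f i)) (hfd : Pairwise (Function.onFun Disjoint f))
    {δ : ℝ≥0∞} (happrox : μ (B ∆ ⋃ i, f i) < δ * μ B) :
    ∃ i, μ (f i \ B) ≤ δ * μ (f i) := by
  rcases le_or_gt 1 δ with hδ | hδ
  · exact ⟨0, (measure_mono Set.sdiff_subset).trans (le_mul_of_one_le_left' hδ)⟩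
  by_contra! hpieces
  set U := ⋃ i, f i
  have hU : δ * μ U ≤ μ (U \ B) := by
    rw [measure_iUnion hfd hf, Set.iUnion_sdiff,
      measure_iUnion (hfd.mono fun _ _ h => h.mono Set.sdiff_subset Set.sdiff_subset)
        fun i => (hf i).diff hB, ← ENNReal.tsum_mul_left]
    exact ENNReal.tsum_le_tsum fun i => (hpieces i).le
  refine happrox.not_ge ?_
  calc δ * μ B ≤ δ * (μ U + μ (B \ U)) := by
        gcongr
        exact (measure_le_inter_add_sdiff μ B U).trans (by gcongr; exact Set.inter_subset_right)
    _ = δ * μ U + δ * μ (B \ U) := mul_add _ _ _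
    _ ≤ μ (U \ B) + μ (B \ U) := add_le_add hU (mul_le_of_le_one_left' hδ.le)
    _ = μ (B ∆ U) := by
        rw [measure_symmDiff_eq hB.nullMeasurableSet (MeasurableSet.iUnion hf).nullMeasurableSet,
          add_comm]

theorem measure_image_le_measure_image_add_measure_image_diff (g : X → X) (A B : Set X) :
    μ (g '' A) ≤ μ (g '' B) + μ (g '' (A \ B)) :=
  calc μ (g '' A) ≤ μ (g '' B ∪ g '' (A \ B)) := by
        rw [← Set.image_union]
        exact measure_mono (Set.image_mono fun x hx => by by_cases hxB : x ∈ B <;> simp [*])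
    _ ≤ μ (g '' B) + μ (g '' (A \ B)) := measure_union_le _ _

theorem tendsto_one_of_monotone_of_forall_le_add {u : ℕ → ℝ≥0∞} (hu : Monotone u)
    (hle : ∀ k, u k ≤ 1) (hclose : ∀ ε : ℝ≥0∞, 0 < ε → ∃ k, 1 ≤ u k + ε) :
    Tendsto u atTop (𝓝 1) := by
  have hsup : ⨆ k, u k = 1 := by
    refine le_antisymm (iSup_le hle) (ENNReal.le_of_forall_pos_le_add fun ε hε _ => ?_)
    obtain ⟨k, hk⟩ := hclose ε (by exact_mod_cast hε)
    exact hk.trans (by gcongr; exact le_iSup u k)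
  exact hsup ▸ tendsto_atTop_iSup hu

end

theorem rokhlin_exactness_general {X : Type*} [MeasurableSpace X] (μ : Measure X)
    [IsProbabilityMeasure μ] (T : X → X) (hT : MeasurePreserving T μ μ)
    (hfwd : ∀ B : Set X, MeasurableSet B → ∀ k : ℕ, MeasurableSet (T^[k] '' B))
    (𝒜 : Set (Set X)) (h𝒜 : ∀ A ∈ 𝒜, MeasurableSet A)
    (happrox : ∀ B : Set X, MeasurableSet B → ∀ ε : ℝ≥0∞, 0 < ε →
      ∃ f : ℕ → Set X, (∀ i, f i ∈ 𝒜) ∧ Pairwise (Function.onFun Disjoint f) ∧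
        μ (B ∆ (⋃ i, f i)) < ε)
    (n : Set X → ℕ) (hn : ∀ A ∈ 𝒜, μ (T^[n A] '' A) = 1)
    (lam : ℝ≥0∞) (hlam_top : lam ≠ ⊤)
    (hdist : ∀ A ∈ 𝒜, ∀ B : Set X, MeasurableSet B → B ⊆ A →
      μ (T^[n A] '' B) ≤ lam * μ B / μ A) :
    ∀ B : Set X, MeasurableSet B → 0 < μ B →
      Tendsto (fun k => μ (T^[k] '' B)) atTop (𝓝 1) := by
  intro B hB hBpos
  refine tendsto_one_of_monotone_of_forall_le_add (hT.monotone_measure_iterate_image (hfwd B hB))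
    (fun _ => prob_le_one) fun ε hε => ?_
  set δ := ε / lam
  have hδ : 0 < δ := ENNReal.div_pos hε.ne' hlam_top
  obtain ⟨f, hf𝒜, hfd, hfB⟩ := happrox B hB (δ * μ B) (ENNReal.mul_pos hδ.ne' hBpos.ne')
  obtain ⟨i, hi⟩ := exists_measure_diff_le_mul_of_measure_symmDiff_lt hB
    (fun i => h𝒜 _ (hf𝒜 i)) hfd hfB
  set A := f i
  refine ⟨n A, ?_⟩
  calc 1 = μ (T^[n A] '' A) := (hn A (hf𝒜 i)).symm
    _ ≤ μ (T^[n A] '' B) + μ (T^[n A] '' (A \ B)) :=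
        measure_image_le_measure_image_add_measure_image_diff _ A B
    _ ≤ μ (T^[n A] '' B) + lam * (δ * μ A) / μ A := by
        gcongr
        exact (hdist A (hf𝒜 i) _ ((h𝒜 A (hf𝒜 i)).diff hB) Set.sdiff_subset).trans (by gcongr)
    _ ≤ μ (T^[n A] '' B) + lam * δ := by
        gcongr
        exact ENNReal.div_le_of_le_mul (mul_assoc lam δ (μ A)).ge
    _ ≤ μ (T^[n A] '' B) + ε := by gcongr; exact ENNReal.mul_div_le

/-- Rokhlin's Exactness Theorem. -/
theorem rokhlin_exactness {X : Type*} [MeasurableSpace X] (μ : Measure X)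
    [IsProbabilityMeasure μ] (T : X → X) (hT : MeasurePreserving T μ μ)
    (hfwd : ∀ B : Set X, MeasurableSet B → ∀ k : ℕ, MeasurableSet (T^[k] '' B))
    (𝒜 : Set (Set X)) (h𝒜 : ∀ A ∈ 𝒜, MeasurableSet A)
    (happrox : ∀ B : Set X, MeasurableSet B → ∀ ε : ℝ≥0∞, 0 < ε →
      ∃ f : ℕ → Set X, (∀ i, f i ∈ 𝒜) ∧ Pairwise (Function.onFun Disjoint f) ∧
        μ (B ∆ (⋃ i, f i)) < ε)
    (n : Set X → ℕ) (hn : ∀ A ∈ 𝒜, μ (T^[n A] '' A) = 1)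
    (lam : ℝ≥0∞) (hlam_pos : 0 < lam) (hlam_top : lam ≠ ⊤)
    (hdist : ∀ A ∈ 𝒜, ∀ B : Set X, MeasurableSet B → B ⊆ A →
      μ (T^[n A] '' B) ≤ lam * μ B / μ A) :
    ∀ B : Set X, MeasurableSet B → 0 < μ B →
      Tendsto (fun k => μ (T^[k] '' B)) atTop (𝓝 1) :=
  rokhlin_exactness_general μ T hT hfwd 𝒜 h𝒜 happrox n hn lam hlam_top hdist
end

section
/- Let $Q$ be the quadratic form of signature $(p,q)$ on $\mathbb{R}^{p+q}$ and $\iota(x)=x/Q(x)$. If $x,y$ satisfy $0<|Q(x)|<1$, $0<|Q(y)|<1$, and $Q(x-y)\ne 0$, then $|Q(\iota(x)-\iota(y))|>|Q(x-y)|$. -/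
open scoped BigOperators

/-- The quadratic form of signature `(p,q)` on `ℝ^p × ℝ^q`. -/
noncomputable def Qpq (p q : ℕ) (x : (Fin p → ℝ) × (Fin q → ℝ)) : ℝ :=
  (∑ i, (x.1 i) ^ 2) - ∑ j, (x.2 j) ^ 2

/-- The inversion `ι(x) = x / Q(x)`. -/
noncomputable def iotaPQ (p q : ℕ) (x : (Fin p → ℝ) × (Fin q → ℝ)) :
    (Fin p → ℝ) × (Fin q → ℝ) :=
  (Qpq p q x)⁻¹ • x

/-!
Expanding `Q(x/Q(x) - y/Q(y))` with the polar form gives `Q(x - y) / (Q(x) Q(y))`, an identity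
valid for every quadratic form over a field. On `0 < |Q| < 1` the denominator has absolute value
less than one, so `|Q|` of the difference strictly increases whenever it is nonzero.
-/

namespace QuadraticMap

variable {K V : Type*} [Field K] [AddCommGroup V] [Module K V]

theorem map_sub_eq_sub_polar (Q : QuadraticForm K V) (x y : V) :
    Q (x - y) = Q x + Q y - polar Q x y := by
  rw [sub_eq_add_neg, QuadraticMap.map_add Q, polar_neg_right, QuadraticMap.map_neg]
  abel

theorem map_inv_smul_sub_inv_smul (Q : QuadraticForm K V) {x y : V} (hx : Q x ≠ 0)
    (hy : Q y ≠ 0) : Q ((Q x)⁻¹ • x - (Q y)⁻¹ • y) = Q (x - y) / (Q x * Q y) := by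
  rw [map_sub_eq_sub_polar, map_sub_eq_sub_polar, QuadraticMap.map_smul, QuadraticMap.map_smul,
    polar_smul_left, polar_smul_right, smul_eq_mul, smul_eq_mul, smul_eq_mul, smul_eq_mul]
  field_simp
  ring

theorem abs_map_sub_lt_abs_map_inv_smul_sub_inv_smul [LinearOrder K] [IsStrictOrderedRing K]
    (Q : QuadraticForm K V) {x y : V} (hx : 0 < |Q x|) (hx1 : |Q x| < 1) (hy : 0 < |Q y|)
    (hy1 : |Q y| < 1) (hxy : Q (x - y) ≠ 0) :
    |Q (x - y)| < |Q ((Q x)⁻¹ • x - (Q y)⁻¹ • y)| := by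
  rw [map_inv_smul_sub_inv_smul Q (abs_pos.mp hx) (abs_pos.mp hy), abs_div, abs_mul,
    lt_div_iff₀ (mul_pos hx hy)]
  have hprod : |Q x| * |Q y| < 1 := mul_lt_one_of_nonneg_of_lt_one_left hx.le hx1 hy1.le
  exact mul_lt_of_lt_one_right (abs_pos.mpr hxy) hprod

end QuadraticMap

noncomputable def signatureForm (p q : ℕ) : QuadraticForm ℝ ((Fin p → ℝ) × (Fin q → ℝ)) :=
  (QuadraticMap.weightedSumSquares ℝ (1 : Fin p → ℝ)).prod
    (-QuadraticMap.weightedSumSquares ℝ (1 : Fin q → ℝ))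

theorem coe_signatureForm (p q : ℕ) : ⇑(signatureForm p q) = Qpq p q := by
  ext x
  simp [signatureForm, Qpq, sq, sub_eq_add_neg]

/-- `ι` is expanding relative to `|Q|` on the region `0 < |Q| < 1`. -/
theorem abs_Q_iota_sub_gt (p q : ℕ) (x y : (Fin p → ℝ) × (Fin q → ℝ))
    (hx : 0 < |Qpq p q x|) (hx1 : |Qpq p q x| < 1)
    (hy : 0 < |Qpq p q y|) (hy1 : |Qpq p q y| < 1)
    (hxy : Qpq p q (x - y) ≠ 0) :
    |Qpq p q (iotaPQ p q x - iotaPQ p q y)| > |Qpq p q (x - y)| := by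
  rw [iotaPQ, iotaPQ, ← coe_signatureForm] at *
  exact QuadraticMap.abs_map_sub_lt_abs_map_inv_smul_sub_inv_smul _ hx hx1 hy hy1 hxy
end
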